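/- For the cyclic cluster state |C_n⟩ with stabilizer generators S_j = Z_{j−1} X_j Z_{j+1} (indices mod n), for every x ∈ F2^n the product S_x = ∏_{j=0}^{n−1} S_j^{x_j} equals (−1)^{g_n(x)} ⊗_{j=0}^{n−1} E(x_j, x_{j−1}+x_{j+1}), where g_n(x) = Σ_{j=0}^{n−1} x_{j−1} x_j x_{j+1} mod 2 and E(a,b) = i^{ab} X^a Z^b. -/
import Mathlib


open Matrix

/-- Pauli `X` acting on qubit `v`. -/
noncomputable def Xop {V : Type*} [Fintype V] [DecidableEq V] (v : V) :
    Matrix (V → ZMod 2) (V → ZMod 2) ℂ :=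
  Matrix.of fun s t => if s = Function.update t v (t v + 1) then 1 else 0

/-- Pauli `Z` acting on qubit `v`. -/
noncomputable def Zop {V : Type*} [Fintype V] [DecidableEq V] (v : V) :
    Matrix (V → ZMod 2) (V → ZMod 2) ℂ :=
  Matrix.diagonal fun t => (-1 : ℂ) ^ (t v).val

/-- Single-qubit Pauli `X`. -/
noncomputable def Xm : Matrix (ZMod 2) (ZMod 2) ℂ :=
  Matrix.of fun s t => if s = t + 1 then 1 else 0

/-- Single-qubit Pauli `Z`. -/
noncomputable def Zm : Matrix (ZMod 2) (ZMod 2) ℂ :=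
  Matrix.diagonal fun t => (-1 : ℂ) ^ t.val

/-- The single-qubit Weyl operator `E(a,b) = i^{ab} X^a Z^b`. -/
noncomputable def Esing (a b : ZMod 2) : Matrix (ZMod 2) (ZMod 2) ℂ :=
  (Complex.I ^ (a.val * b.val)) • (Xm ^ a.val * Zm ^ b.val)

/-- For the cyclic cluster state stabilizer generators `S_j = Z_{j-1} X_j Z_{j+1}`
(indices mod `n`), the product `S_x = ∏_{j=0}^{n-1} S_j^{x_j}` equals
`(-1)^{g_n(x)} ⊗_j E(x_j, x_{j-1}+x_{j+1})` where
`g_n(x) = Σ_j x_{j-1} x_j x_{j+1} mod 2`. -/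


noncomputable def W {n : ℕ} [NeZero n] (c : ZMod n → ZMod 2) (ε : (ZMod n → ZMod 2) → ℂ) :
    Matrix (ZMod n → ZMod 2) (ZMod n → ZMod 2) ℂ :=
  Matrix.of fun s t => if s = t + c then ε t else 0

theorem W_mul {n : ℕ} [NeZero n] (c d : ZMod n → ZMod 2) (ε δ : (ZMod n → ZMod 2) → ℂ) :
    W c ε * W d δ = W (c + d) (fun t => ε (t + d) * δ t) := by
  ext s t
  simp only [W, Matrix.mul_apply, Matrix.of_apply, mul_ite, mul_zero, ite_mul, zero_mul]
  rw [Finset.sum_ite_eq' Finset.univ (t + d)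
    (fun u => if s = u + c then ε u * δ t else 0)]
  simp only [Finset.mem_univ, if_true]
  have : t + d + c = t + (c + d) := by ring
  rw [this]

theorem W_one {n : ℕ} [NeZero n] : (W (0 : ZMod n → ZMod 2) (fun _ => 1)) = 1 := by
  ext s t
  simp [W, Matrix.one_apply, eq_comm]





theorem Sgen_eq {n : ℕ} [NeZero n] (hn : 3 ≤ n) (j : ZMod n) :
    Zop (j - 1) * Xop j * Zop (j + 1) =
      W (Pi.single j 1) (fun t => (-1 : ℂ) ^ ((t (j-1)).val + (t (j+1)).val)) := by
  have h1 : (1 : ZMod n) ≠ 0 := by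
    haveI : Fact (1 < n) := ⟨by omega⟩
    exact one_ne_zero
  have hjj : j - 1 ≠ j := fun h => h1 (by linear_combination -h)
  have hupd : ∀ t : ZMod n → ZMod 2, Function.update t j (t j + 1) = t + Pi.single j 1 := by
    intro t
    funext v
    by_cases hv : v = j
    · subst hv; simp
    · simp [Function.update_apply, Pi.single_apply, hv]
  ext s t
  simp only [W, Zop, Xop, Matrix.of_apply, Matrix.mul_apply, Matrix.diagonal_apply, mul_ite,
    mul_zero, mul_one, ite_mul, zero_mul, Finset.sum_ite_eq, Finset.sum_ite_eq',
    Finset.mem_univ, if_true]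
  rw [hupd]
  show _ = _
  by_cases hc : s = t + Pi.single j 1
  · rw [if_pos hc, if_pos hc, hc]
    have h2 : (t + Pi.single j 1 : ZMod n → ZMod 2) (j - 1) = t (j - 1) := by
      simp [Pi.single_apply, hjj]
    rw [h2, pow_add]
  · rw [if_neg hc, if_neg hc]

theorem two_cases (a : ZMod 2) : a = 0 ∨ a = 1 := by revert a; decide

theorem Sgen_pow {n : ℕ} [NeZero n] (hn : 3 ≤ n) (j : ZMod n) (a : ZMod 2) :
    (Zop (j - 1) * Xop j * Zop (j + 1)) ^ a.val =
      W (Pi.single j a)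
        (fun t => (-1 : ℂ) ^ (a.val * ((t (j-1)).val + (t (j+1)).val))) := by
  rcases two_cases a with h | h <;> subst h
  · show _ ^ 0 = _
    rw [pow_zero]
    simp only [ZMod.val_zero, zero_mul, pow_zero, Pi.single_zero]
    exact (W_one).symm
  · show _ ^ 1 = _
    rw [pow_one, Sgen_eq hn j]
    simp [ZMod.val_one]

theorem W_prod {n : ℕ} [NeZero n] (c : ℕ → ZMod n → ZMod 2)
    (ε : ℕ → (ZMod n → ZMod 2) → ℂ) :
    ∀ (b a : ℕ), ((List.range' a b).map fun k => W (c k) (ε k)).prod =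
      W (∑ k ∈ Finset.Ico a (a+b), c k)
        (fun t => ∏ k ∈ Finset.Ico a (a+b),
          ε k (t + ∑ l ∈ Finset.Ico (k+1) (a+b), c l)) := by
  intro b
  induction b with
  | zero =>
    intro a
    simp only [Nat.add_zero, Finset.Ico_self, Finset.sum_empty, Finset.prod_empty,
      List.range', List.map_nil, List.prod_nil]
    exact (W_one).symm
  | succ b ih =>
    intro a
    rw [List.range'_succ, List.map_cons, List.prod_cons, ih (a+1), W_mul]
    have hab : a + 1 + b = a + (b + 1) := by omega
    rw [hab]
    have hlt : a < a + (b + 1) := by omega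
    rw [Finset.sum_eq_sum_Ico_succ_bot hlt c]
    have hε : (fun t => ε a (t + ∑ k ∈ Finset.Ico (a + 1) (a + (b + 1)), c k) *
        ∏ k ∈ Finset.Ico (a + 1) (a + (b + 1)),
          ε k (t + ∑ l ∈ Finset.Ico (k + 1) (a + (b + 1)), c l)) =
        (fun t => ∏ k ∈ Finset.Ico a (a + (b + 1)),
          ε k (t + ∑ l ∈ Finset.Ico (k + 1) (a + (b + 1)), c l)) := by
      funext t
      rw [Finset.prod_eq_prod_Ico_succ_bot hlt]
    rw [hε]


noncomputable def chi (k : ZMod 4) : ℂ := Complex.I ^ k.val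
def v2 (a : ZMod 2) : ZMod 4 := (a.val : ZMod 4)
def d2 (a : ZMod 2) : ZMod 4 := 2 * (a.val : ZMod 4)

theorem I_pow_mod (m : ℕ) : Complex.I ^ m = Complex.I ^ (m % 4) := by
  conv_lhs => rw [← Nat.div_add_mod m 4]
  rw [pow_add, pow_mul, Complex.I_pow_four, one_pow, one_mul]

theorem chi_add (a b : ZMod 4) : chi (a + b) = chi a * chi b := by
  rw [chi, chi, chi, ← pow_add, ZMod.val_add, ← I_pow_mod]

theorem chi_zero : chi 0 = 1 := by simp [chi]

theorem chi_sum {ι : Type*} (s : Finset ι) (f : ι → ZMod 4) :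
    chi (∑ i ∈ s, f i) = ∏ i ∈ s, chi (f i) := by
  induction s using Finset.cons_induction with
  | empty => simp [chi_zero]
  | cons i s hi ih => rw [Finset.sum_cons, Finset.prod_cons, chi_add, ih]

theorem d2_add (a b : ZMod 2) : d2 (a + b) = d2 a + d2 b := by revert a b; decide

theorem d2_zero : d2 0 = 0 := by decide

theorem d2_sum {ι : Type*} (s : Finset ι) (f : ι → ZMod 2) :
    d2 (∑ i ∈ s, f i) = ∑ i ∈ s, d2 (f i) := by
  induction s using Finset.cons_induction with
  | empty => simp [d2_zero]
  | cons i s hi ih => rw [Finset.sum_cons, Finset.sum_cons, d2_add, ih]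

theorem val4_0 : (0 : ZMod 4).val = 0 := rfl
theorem val4_1 : (1 : ZMod 4).val = 1 := rfl
theorem val4_2 : (2 : ZMod 4).val = 2 := rfl
theorem val4_3 : (3 : ZMod 4).val = 3 := rfl

theorem neg_one_pow_mod2 (k : ℕ) : ((-1 : ℂ)) ^ k = (-1) ^ (k % 2) := by
  conv_lhs => rw [← Nat.div_add_mod k 2]
  rw [pow_add, pow_mul, neg_one_sq, one_pow, one_mul]

theorem L0 (m : ZMod 2) : ((-1 : ℂ)) ^ m.val = chi (d2 m) := by
  rcases (by revert m; decide : m = 0 ∨ m = 1) with h | h <;> subst h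
  · rw [show d2 0 = 0 by decide, chi_zero, ZMod.val_zero, pow_zero]
  · rw [show d2 1 = 2 by decide, chi, val4_2, ZMod.val_one, pow_one, Complex.I_sq]

theorem L1 (a p q : ZMod 2) :
    ((-1 : ℂ)) ^ (a.val * (p.val + q.val)) = chi (d2 (a * p + a * q)) := by
  rw [← L0, neg_one_pow_mod2, neg_one_pow_mod2 ((a * p + a * q).val)]
  congr 1
  revert a p q; decide

theorem L2 (a c w : ZMod 2) :
    Complex.I ^ (a.val * c.val) * ((-1 : ℂ)) ^ (c.val * w.val) =
      chi (v2 a * v2 c + d2 (c * w)) := by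
  rw [chi_add]
  congr 1
  · rw [chi]
    congr 1
    revert a c; decide
  · rw [← L0, neg_one_pow_mod2, neg_one_pow_mod2 ((c * w).val)]
    congr 1
    revert c w; decide

theorem L3 (a b c : ZMod 2) :
    v2 b * v2 (a + c) = v2 b * v2 a + v2 b * v2 c + d2 (a * b * c) := by
  revert a b c; decide

theorem L4 (a c : ZMod 2) : v2 a * v2 c + v2 a * v2 c = d2 (a * c) := by
  revert a c; decide

theorem d2_self_cancel (m : ZMod 2) : d2 m + d2 m = 0 := by revert m; decide







theorem Esing_apply (a b u v : ZMod 2) :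
    Esing a b u v =
      if u = v + a then Complex.I ^ (a.val * b.val) * ((-1 : ℂ)) ^ (b.val * v.val) else 0 := by
  rcases two_cases a with h | h <;> rcases two_cases b with h' | h' <;> subst h <;> subst h' <;>
    simp [Esing, Xm, Zm, ZMod.val_zero, ZMod.val_one, pow_one, pow_zero, Matrix.one_apply,
      Matrix.mul_diagonal, Matrix.diagonal_apply, Matrix.smul_apply, mul_comm] <;>
    (try split) <;> simp_all

theorem prod_ite_all {ι : Type*} [Fintype ι] (p : ι → Prop) [DecidablePred p] (f : ι → ℂ) :
    (∏ j, (if p j then f j else 0)) = if (∀ j, p j) then ∏ j, f j else 0 := by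
  by_cases h : ∀ j, p j
  · rw [if_pos h]
    exact Finset.prod_congr rfl fun j _ => if_pos (h j)
  · rw [if_neg h]
    obtain ⟨j, hj⟩ := not_forall.mp h
    exact Finset.prod_eq_zero (Finset.mem_univ j) (if_neg hj)

theorem W_smul {n : ℕ} [NeZero n] (z : ℂ) (c : ZMod n → ZMod 2)
    (ε : (ZMod n → ZMod 2) → ℂ) : z • W c ε = W c (fun t => z * ε t) := by
  ext s t
  simp only [W, Matrix.smul_apply, Matrix.of_apply, smul_ite, smul_zero, smul_eq_mul,
    mul_ite, mul_zero]

theorem single_sum_apply {n : ℕ} [NeZero n] (x : ZMod n → ZMod 2) (a b : ℕ) (hb : b ≤ n)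
    (v : ZMod n) :
    (∑ l ∈ Finset.Ico a b, Pi.single ((l : ZMod n)) (x (l : ZMod n)) : ZMod n → ZMod 2) v =
      if v.val ∈ Finset.Ico a b then x v else 0 := by
  rw [Finset.sum_apply]
  by_cases h : v.val ∈ Finset.Ico a b
  · rw [if_pos h, Finset.sum_eq_single v.val]
    · rw [ZMod.natCast_rightInverse v, Pi.single_eq_same]
    · intro l hl hne
      have hlv : (l : ZMod n) ≠ v := by
        intro he
        apply hne
        have : ((l : ZMod n)).val = l := ZMod.val_cast_of_lt (lt_of_lt_of_le (Finset.mem_Ico.mp hl).2 hb)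
        rw [← this, he]
      exact Pi.single_eq_of_ne (fun he => hlv he.symm) _
    · intro hv; exact absurd h hv
  · rw [if_neg h]
    apply Finset.sum_eq_zero
    intro l hl
    have hlv : v ≠ (l : ZMod n) := by
      intro he
      apply h
      have : ((l : ZMod n)).val = l := ZMod.val_cast_of_lt (lt_of_lt_of_le (Finset.mem_Ico.mp hl).2 hb)
      rw [he, this]
      exact hl
    exact Pi.single_eq_of_ne hlv _

theorem sum_range_cast {M : Type*} [AddCommMonoid M] {n : ℕ} [NeZero n] (f : ZMod n → M) :
    ∑ k ∈ Finset.range n, f (k : ZMod n) = ∑ j : ZMod n, f j := by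
  refine Finset.sum_nbij' (fun k => (k : ZMod n)) (fun z => z.val) ?_ ?_ ?_ ?_ ?_
  · intro k _; exact Finset.mem_univ _
  · intro z _; exact Finset.mem_range.mpr (ZMod.val_lt z)
  · intro k hk; exact ZMod.val_cast_of_lt (Finset.mem_range.mp hk)
  · intro z _; exact ZMod.natCast_rightInverse z
  · intro k _; rfl

theorem prod_range_cast {M : Type*} [CommMonoid M] {n : ℕ} [NeZero n] (f : ZMod n → M) :
    ∏ k ∈ Finset.range n, f (k : ZMod n) = ∏ j : ZMod n, f j := by
  refine Finset.prod_nbij' (fun k => (k : ZMod n)) (fun z => z.val) ?_ ?_ ?_ ?_ ?_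
  · intro k _; exact Finset.mem_univ _
  · intro z _; exact Finset.mem_range.mpr (ZMod.val_lt z)
  · intro k hk; exact ZMod.val_cast_of_lt (Finset.mem_range.mp hk)
  · intro z _; exact ZMod.natCast_rightInverse z
  · intro k _; rfl

theorem sum_shift {M : Type*} [AddCommMonoid M] {n : ℕ} [NeZero n] (f : ZMod n → M)
    (c : ZMod n) : ∑ j : ZMod n, f (j + c) = ∑ j : ZMod n, f j :=
  Fintype.sum_equiv (Equiv.addRight c) _ _ (fun j => rfl)

theorem neg_one_cast {n : ℕ} [NeZero n] (hn : 3 ≤ n) :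
    ((n - 1 : ℕ) : ZMod n) = -1 := by
  have h1 : (1:ℕ) ≤ n := by omega
  push_cast [Nat.cast_sub h1]
  simp [ZMod.natCast_self]

theorem tailA {n : ℕ} [NeZero n] (hn : 3 ≤ n) (x t : ZMod n → ZMod 2) (k : ℕ) (hk : k < n) :
    (t + ∑ l ∈ Finset.Ico (k+1) n, Pi.single ((l : ZMod n)) (x (l : ZMod n)) : ZMod n → ZMod 2) ((k : ZMod n) - 1)
      = t ((k : ZMod n) - 1) + (if (k : ZMod n) = 0 then x ((k : ZMod n) - 1) else 0) := by
  rw [Pi.add_apply, single_sum_apply x (k+1) n le_rfl]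
  congr 1
  rcases Nat.eq_zero_or_pos k with h0 | h0
  · subst h0
    rw [Nat.cast_zero, if_pos rfl, if_pos]
    rw [zero_sub, Finset.mem_Ico, ← neg_one_cast hn, ZMod.val_cast_of_lt (by omega)]
    omega
  · have hkne : (k : ZMod n) ≠ 0 := by
      intro h
      have := ZMod.val_cast_of_lt hk
      rw [h, ZMod.val_zero] at this
      omega
    rw [if_neg hkne, if_neg]
    have hc : ((k : ZMod n) - 1) = ((k - 1 : ℕ) : ZMod n) := by
      have : (((k:ℕ) - 1 : ℕ) : ZMod n) = (k : ZMod n) - 1 := by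
        push_cast [Nat.cast_sub h0]
        ring
      rw [this]
    rw [hc, ZMod.val_cast_of_lt (by omega), Finset.mem_Ico]
    omega

theorem tailB {n : ℕ} [NeZero n] (hn : 3 ≤ n) (x t : ZMod n → ZMod 2) (k : ℕ) (hk : k < n) :
    (t + ∑ l ∈ Finset.Ico (k+1) n, Pi.single ((l : ZMod n)) (x (l : ZMod n)) : ZMod n → ZMod 2) ((k : ZMod n) + 1)
      = t ((k : ZMod n) + 1) + (if (k : ZMod n) + 1 = 0 then 0 else x ((k : ZMod n) + 1)) := by
  rw [Pi.add_apply, single_sum_apply x (k+1) n le_rfl]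
  congr 1
  have hc : ((k : ZMod n) + 1) = ((k + 1 : ℕ) : ZMod n) := by push_cast; ring
  rcases Nat.lt_or_ge (k+1) n with h0 | h0
  · have hne : (k : ZMod n) + 1 ≠ 0 := by
      rw [hc]
      intro h
      have := ZMod.val_cast_of_lt h0
      rw [h, ZMod.val_zero] at this
      omega
    rw [if_neg hne, if_pos]
    rw [hc, ZMod.val_cast_of_lt h0, Finset.mem_Ico]
    omega
  · have hkn : k + 1 = n := by omega
    have hz : (k : ZMod n) + 1 = 0 := by
      rw [hc, hkn, ZMod.natCast_self]
    rw [if_pos hz, if_neg]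
    rw [hz, ZMod.val_zero, Finset.mem_Ico]
    omega

theorem hper (p q : Prop) [Decidable p] [Decidable q] (a b c u w : ZMod 2) :
    d2 (a * (u + (if p then b else 0)) + a * (w + (if q then 0 else c))) =
      d2 (a * u) + (if p then d2 (a * b) else 0) + d2 (a * w) +
        (d2 (a * c) + (if q then d2 (a * c) else 0)) := by
  split_ifs <;> revert a b c u w <;> decide

theorem key_z4 {n : ℕ} [NeZero n] (x t : ZMod n → ZMod 2) :
    d2 (∑ j : ZMod n, (x j * (t (j - 1) + (if j = 0 then x (j - 1) else 0)) +
        x j * (t (j + 1) + (if j + 1 = 0 then 0 else x (j + 1))))) =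
      d2 (∑ j : ZMod n, x (j - 1) * x j * x (j + 1)) +
        ∑ j : ZMod n, (v2 (x j) * v2 (x (j - 1) + x (j + 1)) +
          d2 ((x (j - 1) + x (j + 1)) * t j)) := by
  rw [d2_sum, d2_sum]
  have hLj : ∀ j : ZMod n, d2 (x j * (t (j - 1) + (if j = 0 then x (j - 1) else 0)) +
      x j * (t (j + 1) + (if j + 1 = 0 then 0 else x (j + 1)))) =
      d2 (x j * t (j - 1)) + (if j = 0 then d2 (x j * x (j - 1)) else 0) +
        d2 (x j * t (j + 1)) + (d2 (x j * x (j + 1)) + (if j + 1 = 0 then d2 (x j * x (j + 1)) else 0)) := by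
    intro j
    rw [hper]
  have hRj : ∀ j : ZMod n, v2 (x j) * v2 (x (j - 1) + x (j + 1)) +
      d2 ((x (j - 1) + x (j + 1)) * t j) =
      (v2 (x j) * v2 (x (j - 1)) + v2 (x j) * v2 (x (j + 1)) + d2 (x (j - 1) * x j * x (j + 1))) +
        (d2 (x (j - 1) * t j) + d2 (x (j + 1) * t j)) := by
    intro j
    rw [L3, add_mul, d2_add]
  rw [Finset.sum_congr rfl fun j _ => hLj j, Finset.sum_congr rfl fun j _ => hRj j]
  simp only [Finset.sum_add_distrib]
  have h1 : (∑ j : ZMod n, if j = 0 then d2 (x j * x (j - 1)) else 0) =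
      d2 (x 0 * x (0 - 1)) := by
    rw [Finset.sum_ite_eq' Finset.univ (0 : ZMod n) (fun j => d2 (x j * x (j - 1)))]
    simp
  have h2 : (∑ j : ZMod n, if j + 1 = 0 then d2 (x j * x (j + 1)) else 0) =
      d2 (x (-1) * x (-1 + 1)) := by
    simp only [add_eq_zero_iff_eq_neg]
    rw [Finset.sum_ite_eq' Finset.univ (-1 : ZMod n) (fun j => d2 (x j * x (j + 1)))]
    simp
  have h6 : d2 (x 0 * x (0 - 1)) + d2 (x (-1) * x (-1 + 1)) = 0 := by
    rw [zero_sub, neg_add_cancel, mul_comm, d2_self_cancel]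
  have h4 : (∑ j : ZMod n, v2 (x j) * v2 (x (j - 1))) +
      (∑ j : ZMod n, v2 (x j) * v2 (x (j + 1))) = ∑ j : ZMod n, d2 (x j * x (j + 1)) := by
    have hre : (∑ j : ZMod n, v2 (x j) * v2 (x (j - 1))) =
        ∑ j : ZMod n, v2 (x (j + 1)) * v2 (x j) := by
      rw [← sum_shift (fun j => v2 (x j) * v2 (x (j - 1))) 1]
      exact Finset.sum_congr rfl fun j _ => by rw [add_sub_cancel_right]
    rw [hre, ← Finset.sum_add_distrib]
    exact Finset.sum_congr rfl fun j _ => by rw [mul_comm (v2 (x (j+1))), L4]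
  have h5 : (∑ j : ZMod n, d2 (x (j - 1) * x j * x (j + 1))) +
      (∑ j : ZMod n, d2 (x (j - 1) * x j * x (j + 1))) = 0 := by
    rw [← Finset.sum_add_distrib]
    simp [d2_self_cancel]
  have hR : (∑ j : ZMod n, d2 (x (j - 1) * t j)) =
      ∑ j : ZMod n, d2 (x j * t (j + 1)) := by
    rw [← sum_shift (fun j => d2 (x (j - 1) * t j)) 1]
    exact Finset.sum_congr rfl fun j _ => by rw [add_sub_cancel_right]
  have hS : (∑ j : ZMod n, d2 (x (j + 1) * t j)) =
      ∑ j : ZMod n, d2 (x j * t (j - 1)) := by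
    rw [← sum_shift (fun j => d2 (x (j + 1) * t j)) (-1)]
    refine Finset.sum_congr rfl fun j _ => ?_
    have e1 : j + -1 + 1 = j := by ring
    have e2 : j + -1 = j - 1 := by ring
    rw [e1, e2]
  linear_combination h1 + h2 + h6 - h4 - h5 - hR - hS

theorem W_congr {n : ℕ} [NeZero n] (c : ZMod n → ZMod 2) (ε δ : (ZMod n → ZMod 2) → ℂ)
    (h : ∀ t, ε t = δ t) : W c ε = W c δ := by
  unfold W
  congr 1
  funext s t
  rw [h]


theorem cyclic_cluster_stabilizer_phase (n : ℕ) [NeZero n] (hn : 3 ≤ n)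
    (x : ZMod n → ZMod 2)
    (Sgen : ZMod n → Matrix (ZMod n → ZMod 2) (ZMod n → ZMod 2) ℂ)
    (hSgen : ∀ j, Sgen j = Zop (j - 1) * Xop j * Zop (j + 1))
    (Sx : Matrix (ZMod n → ZMod 2) (ZMod n → ZMod 2) ℂ)
    (hSx : Sx = ((List.range n).map fun j =>
      Sgen (j : ZMod n) ^ (x (j : ZMod n)).val).prod) :
    Sx = ((-1 : ℂ) ^ (∑ j : ZMod n, x (j - 1) * x j * x (j + 1)).val) •
      Matrix.of fun s t =>
        ∏ j : ZMod n, (Esing (x j) (x (j - 1) + x (j + 1))) (s j) (t j) := by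
  -- Step B : LHS as a W matrix
  have hmap : ((List.range n).map fun k : ℕ => Sgen (k : ZMod n) ^ (x (k : ZMod n)).val) =
      ((List.range n).map fun k : ℕ => W (Pi.single ((k : ZMod n)) (x (k : ZMod n)))
        (fun t => (-1 : ℂ) ^ ((x (k : ZMod n)).val *
          ((t ((k : ZMod n) - 1)).val + (t ((k : ZMod n) + 1)).val)))) := by
    apply List.map_congr_left
    intro k _
    rw [hSgen]
    exact Sgen_pow hn _ _
  rw [hSx]
  simp only [bind_pure_comp, List.map_eq_map, List.map_map, Function.comp_def]
  rw [hmap, List.range_eq_range', W_prod]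
  simp only [Nat.zero_add]
  -- the shift vector is x
  have hC : (∑ k ∈ Finset.Ico 0 n, Pi.single ((k : ZMod n)) (x (k : ZMod n)) :
      ZMod n → ZMod 2) = x := by
    funext v
    rw [single_sum_apply x 0 n le_rfl v, if_pos]
    rw [Finset.mem_Ico]
    exact ⟨Nat.zero_le _, ZMod.val_lt v⟩
  rw [hC]
  -- Step A : RHS as a W matrix
  have hRHSm : (Matrix.of fun s t =>
      ∏ j : ZMod n, (Esing (x j) (x (j - 1) + x (j + 1))) (s j) (t j)) =
      W x (fun t => ∏ j : ZMod n, (Complex.I ^ ((x j).val * (x (j - 1) + x (j + 1)).val) *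
        (-1 : ℂ) ^ ((x (j - 1) + x (j + 1)).val * (t j).val))) := by
    ext s t
    simp only [Matrix.of_apply, W]
    rw [Finset.prod_congr rfl fun j _ => Esing_apply (x j) (x (j - 1) + x (j + 1)) (s j) (t j)]
    rw [prod_ite_all (fun j => s j = t j + x j)
      (fun j => Complex.I ^ ((x j).val * (x (j - 1) + x (j + 1)).val) *
        (-1 : ℂ) ^ ((x (j - 1) + x (j + 1)).val * (t j).val))]
    congr 1
    rw [eq_iff_iff]
    constructor
    · intro h; funext v; exact h v
    · intro h v; rw [h]; rfl
  rw [hRHSm, W_smul]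
  -- reduce to equality of the phase functions
  refine W_congr _ _ _ ?_
  intro t
  beta_reduce
  rw [← Finset.range_eq_Ico]
  -- LHS phase
  have hL : ∀ k ∈ Finset.range n,
      (-1 : ℂ) ^ ((x (k : ZMod n)).val *
        (((t + ∑ l ∈ Finset.Ico (k+1) n, Pi.single ((l : ZMod n)) (x (l : ZMod n)) :
          ZMod n → ZMod 2) ((k : ZMod n) - 1)).val +
         ((t + ∑ l ∈ Finset.Ico (k+1) n, Pi.single ((l : ZMod n)) (x (l : ZMod n)) :
          ZMod n → ZMod 2) ((k : ZMod n) + 1)).val)) =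
      chi (d2 (x (k : ZMod n) * (t ((k : ZMod n) - 1) +
          (if (k : ZMod n) = 0 then x ((k : ZMod n) - 1) else 0)) +
        x (k : ZMod n) * (t ((k : ZMod n) + 1) +
          (if (k : ZMod n) + 1 = 0 then 0 else x ((k : ZMod n) + 1))))) := by
    intro k hk
    rw [tailA hn x t k (Finset.mem_range.mp hk), tailB hn x t k (Finset.mem_range.mp hk), L1]
  refine (Finset.prod_congr rfl hL).trans ?_
  rw [prod_range_cast (fun j => chi (d2 (x j * (t (j - 1) + (if j = 0 then x (j - 1) else 0)) +
    x j * (t (j + 1) + (if j + 1 = 0 then 0 else x (j + 1))))))]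
  rw [← chi_sum, ← d2_sum]
  -- RHS phase
  rw [Finset.prod_congr rfl fun j _ => L2 (x j) (x (j - 1) + x (j + 1)) (t j)]
  rw [L0, ← chi_sum, ← chi_add]
  congr 1
  exact key_z4 x t
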